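/- arXiv:1601.07647 — 2 statements merged into one kernel-verified Lean document; each statement's English description precedes it below -/
import Mathlib

section
/- Let C ⊆ (Z_2)^n with sum of elements σ = 0. Then the cubelike graph X(C) is periodic at time π/2, i.e., H(π/2) is a unimodular scalar multiple of the identity matrix (specifically H(π/2) = i^{|C|}·I). -/
/-!
The adjacency matrix of `X(C)` is the sum of the translation matrices `P x`, `x ∈ C`, which
commute and are involutions. For an involution `P`, `exp (z • P) = cosh z • 1 + sinh z • P`, so
`exp ((π/2) i • P) = i • P`; taking the product over `C` gives `i ^ |C| • P σ`, and `P 0 = 1`.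
-/

open Matrix Complex

noncomputable def cubeAdj {n : ℕ} (C : Finset (Fin n → ZMod 2)) :
    Matrix (Fin n → ZMod 2) (Fin n → ZMod 2) ℂ :=
  Matrix.of fun u v => if u - v ∈ C then 1 else 0

open scoped Nat

namespace NormedSpace

variable {A : Type*} [Ring A] [Algebra ℂ A] [TopologicalSpace A] [IsTopologicalRing A]
  [T2Space A] [ContinuousSMul ℂ A]

theorem exp_smul_of_mul_self_eq_one {a : A} (ha : a * a = 1) (z : ℂ) :
    NormedSpace.exp (z • a) = cosh z • (1 : A) + sinh z • a := by
  have hpow (k : ℕ) : (z • a) ^ (2 * k) = z ^ (2 * k) • (1 : A) := by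
    rw [smul_pow, pow_mul a, sq a, ha, one_pow]
  have heven : HasSum (fun k : ℕ => (((2 * k)! : ℂ)⁻¹) • (z • a) ^ (2 * k)) (cosh z • 1) := by
    convert (hasSum_cosh z).smul_const (1 : A) using 2 with k
    rw [hpow, smul_smul, inv_mul_eq_div]
  have hodd :
      HasSum (fun k : ℕ => (((2 * k + 1)! : ℂ)⁻¹) • (z • a) ^ (2 * k + 1)) (sinh z • a) := by
    convert (hasSum_sinh z).smul_const a using 2 with k
    rw [pow_succ, hpow, smul_mul_smul, one_mul, smul_smul, ← pow_succ, inv_mul_eq_div]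
  rw [exp_eq_tsum ℂ]
  exact (HasSum.even_add_odd (f := fun n => (n ! : ℂ)⁻¹ • (z • a) ^ n) heven hodd).tsum_eq

theorem exp_pi_div_two_mul_I_smul_of_mul_self_eq_one {a : A} (ha : a * a = 1) :
    NormedSpace.exp ((((Real.pi / 2 : ℝ) : ℂ) * I) • a) = I • a := by
  rw [exp_smul_of_mul_self_eq_one ha, cosh_mul_I, sinh_mul_I, ← ofReal_cos, ← ofReal_sin,
    Real.cos_pi_div_two, Real.sin_pi_div_two, ofReal_zero, ofReal_one, zero_smul, zero_add,
    one_mul]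

end NormedSpace

section translationMatrix

variable {G : Type*} [AddCommGroup G] [DecidableEq G]

noncomputable def translationMatrix (x : G) : Matrix G G ℂ :=
  of fun u v => if u - v = x then 1 else 0

theorem translationMatrix_zero : translationMatrix (0 : G) = 1 := by
  ext u v
  simp [translationMatrix, one_apply, sub_eq_zero]

variable [Fintype G]

theorem translationMatrix_add (x y : G) :
    translationMatrix (x + y) = translationMatrix x * translationMatrix y := by
  ext u v
  rw [mul_apply, Finset.sum_eq_single (u - x)]
  · simp [translationMatrix, sub_eq_iff_eq_add', add_left_comm x v]
  · intro w _ hw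
    have : u - w ≠ x := fun h => hw (by rw [← h, sub_sub_cancel])
    simp [translationMatrix, this]
  · simp

theorem translationMatrix_commute (x y : G) :
    Commute (translationMatrix x) (translationMatrix y) := by
  rw [Commute, SemiconjBy, ← translationMatrix_add, ← translationMatrix_add, add_comm]

theorem translationMatrix_mul_self [Module (ZMod 2) G] (x : G) :
    translationMatrix x * translationMatrix x = 1 := by
  rw [← translationMatrix_add, ZModModule.add_self, translationMatrix_zero]

theorem exp_pi_div_two_mul_I_smul_sum_translationMatrix [Module (ZMod 2) G] (s : Finset G) :
    NormedSpace.exp ((((Real.pi / 2 : ℝ) : ℂ) * I) • ∑ x ∈ s, translationMatrix x) =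
      I ^ s.card • translationMatrix (∑ x ∈ s, x) := by
  induction s using Finset.induction_on with
  | empty => simp [translationMatrix_zero]
  | insert a s ha ih =>
    have hcomm : Commute ((((Real.pi / 2 : ℝ) : ℂ) * I) • translationMatrix a)
        ((((Real.pi / 2 : ℝ) : ℂ) * I) • ∑ x ∈ s, translationMatrix x) :=
      ((Commute.sum_right _ _ _ fun x _ => translationMatrix_commute a x).smul_left _).smul_right _
    rw [Finset.sum_insert ha, smul_add, Matrix.exp_add_of_commute _ _ hcomm, ih,
      NormedSpace.exp_pi_div_two_mul_I_smul_of_mul_self_eq_one (translationMatrix_mul_self a),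
      smul_mul_smul, ← translationMatrix_add, Finset.sum_insert ha,
      Finset.card_insert_of_notMem ha, pow_succ']

end translationMatrix

theorem cubeAdj_eq_sum_translationMatrix {n : ℕ} (C : Finset (Fin n → ZMod 2)) :
    cubeAdj C = ∑ x ∈ C, translationMatrix x := by
  ext u v
  simp only [cubeAdj, translationMatrix, of_apply, Matrix.sum_apply, Finset.sum_ite_eq]

theorem cubelike_periodic (n : ℕ) (C : Finset (Fin n → ZMod 2))
    (hσ : (∑ x ∈ C, x) = 0) :
    NormedSpace.exp ((((Real.pi / 2 : ℝ) : ℂ) * Complex.I) • cubeAdj C) =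
      (Complex.I ^ C.card) • (1 : Matrix (Fin n → ZMod 2) (Fin n → ZMod 2) ℂ) ∧
    ‖Complex.I ^ C.card‖ = 1 := by
  refine ⟨?_, by rw [norm_pow, norm_I, one_pow]⟩
  rw [cubeAdj_eq_sum_translationMatrix, exp_pi_div_two_mul_I_smul_sum_translationMatrix, hσ,
    translationMatrix_zero]
end

section
/- Every gcd-graph over a finite abelian group of order 2^n is isomorphic to a cubelike graph, i.e., to a Cayley graph over (Z_2)^n. -/
/-!
Writing elements of `ZMod (p ^ m)` in base `p` gives a bijection with `(ZMod p)^m`. For a prime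
`p`, `gcd(x - y, p^m)` is the largest `p^k` (`k ≤ m`) dividing `x - y`, and `p^k ∣ x - y` exactly
when `x` and `y` share their lowest `k` digits, i.e. when the digitwise difference of `x` and `y`
vanishes in its lowest `k` places. So the gcd-tuple of `u - v` is a function of the digitwise
difference of `u` and `v`, and the gcd-graph is isomorphic to the Cayley graph over `(ZMod 2)^N`
whose connection set is the preimage of `D` under that function.
-/

theorem Nat.mod_pow_eq_mod_pow_iff {b : ℕ} (hb : 0 < b) (k a c : ℕ) :
    a % b ^ k = c % b ^ k ↔ ∀ j < k, a / b ^ j % b = c / b ^ j % b := by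
  induction k with
  | zero => simp [Nat.mod_one]
  | succ k ih =>
    have hbk : 0 < b ^ k := Nat.pow_pos hb
    rw [Nat.forall_lt_succ_right, ← ih, Nat.mod_pow_succ, Nat.mod_pow_succ]
    constructor
    · intro h
      have hmod := congrArg (· % b ^ k) h
      have hdiv := congrArg (· / b ^ k) h
      simp only [Nat.add_mul_mod_self_left, Nat.mod_mod] at hmod
      simp only [Nat.add_mul_div_left _ _ hbk, Nat.div_eq_of_lt (Nat.mod_lt _ hbk), zero_add]
        at hdiv
      exact ⟨hmod, hdiv⟩
    · rintro ⟨hmod, hdigit⟩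
      rw [hmod, hdigit]

theorem Nat.gcd_prime_pow_eq_of_pow_dvd_iff {p m a c : ℕ} (hp : p.Prime)
    (h : ∀ k ≤ m, p ^ k ∣ a ↔ p ^ k ∣ c) : a.gcd (p ^ m) = c.gcd (p ^ m) := by
  have gcd_dvd : ∀ a c, (∀ k ≤ m, p ^ k ∣ a → p ^ k ∣ c) →
      a.gcd (p ^ m) ∣ c.gcd (p ^ m) := by
    intro a c h
    obtain ⟨k, hk, hgcd⟩ := (Nat.dvd_prime_pow hp).mp (Nat.gcd_dvd_right a (p ^ m))
    rw [hgcd]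
    exact Nat.dvd_gcd (h k hk (hgcd ▸ Nat.gcd_dvd_left a _)) (pow_dvd_pow p hk)
  exact Nat.dvd_antisymm (gcd_dvd a c fun k hk => (h k hk).mp)
    (gcd_dvd c a fun k hk => (h k hk).mpr)

theorem ZMod.dvd_val_sub_iff {N d : ℕ} [NeZero N] (hd : d ∣ N) (x y : ZMod N) :
    d ∣ (x - y).val ↔ x.val % d = y.val % d := by
  have hval : ∀ w : ZMod N, ((w.val : ℕ) : ZMod d) = ZMod.castHom hd (ZMod d) w := fun w => by
    rw [ZMod.natCast_val, ZMod.castHom_apply]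
  rw [← ZMod.natCast_eq_zero_iff, hval, map_sub, sub_eq_zero, ← hval, ← hval,
    ZMod.natCast_eq_natCast_iff']

namespace ZMod

variable (p m : ℕ)

def digits (x : ZMod (p ^ m)) (j : Fin m) : ZMod p := ((x.val / p ^ (j : ℕ) : ℕ) : ZMod p)

theorem val_digits (x : ZMod (p ^ m)) (j : Fin m) :
    (digits p m x j).val = x.val / p ^ (j : ℕ) % p :=
  ZMod.val_natCast _ _

theorem digits_zero : digits p m 0 = 0 := by
  funext j
  simp [digits]

variable [NeZero p]

theorem digits_injective : Function.Injective (digits p m) := by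
  intro x y h
  have hp : 0 < p := Nat.pos_of_neZero p
  have hmod : x.val % p ^ m = y.val % p ^ m :=
    (Nat.mod_pow_eq_mod_pow_iff hp m _ _).mpr fun j hj => by
      simpa only [val_digits] using congrArg ZMod.val (congrFun h ⟨j, hj⟩)
  rw [Nat.mod_eq_of_lt (ZMod.val_lt x), Nat.mod_eq_of_lt (ZMod.val_lt y)] at hmod
  exact ZMod.val_injective _ hmod

noncomputable def digitEquiv : ZMod (p ^ m) ≃ (Fin m → ZMod p) :=
  Equiv.ofBijective (digits p m) <| (Fintype.bijective_iff_injective_and_card _).mpr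
    ⟨digits_injective p m, by simp [ZMod.card]⟩

variable {p m}

theorem pow_dvd_val_sub_iff {k : ℕ} (hk : k ≤ m) (x y : ZMod (p ^ m)) :
    p ^ k ∣ (x - y).val ↔ ∀ j : Fin m, (j : ℕ) < k → digits p m x j = digits p m y j := by
  rw [ZMod.dvd_val_sub_iff (pow_dvd_pow p hk), Nat.mod_pow_eq_mod_pow_iff (Nat.pos_of_neZero p)]
  simp only [← (ZMod.val_injective p).eq_iff, val_digits]
  exact ⟨fun h j hj => h j hj, fun h j hj => h ⟨j, hj.trans_le hk⟩ hj⟩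

theorem gcd_val_digitEquiv_symm_sub (hp : p.Prime) (x y : ZMod (p ^ m)) :
    ((digitEquiv p m).symm (digitEquiv p m x - digitEquiv p m y)).val.gcd (p ^ m)
      = (x - y).val.gcd (p ^ m) := by
  set z := (digitEquiv p m).symm (digitEquiv p m x - digitEquiv p m y)
  have hz : digits p m z = digits p m x - digits p m y := (digitEquiv p m).apply_symm_apply _
  refine Nat.gcd_prime_pow_eq_of_pow_dvd_iff hp fun k hk => ?_
  rw [← sub_zero z, pow_dvd_val_sub_iff hk, pow_dvd_val_sub_iff hk, hz, digits_zero]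
  simp only [Pi.sub_apply, Pi.zero_apply, sub_eq_zero]

end ZMod

def flattenAddEquiv {r : ℕ} (n : Fin r → ℕ) (M : Type*) [AddCommGroup M] :
    (∀ i, Fin (n i) → M) ≃+ (Fin (∑ i, n i) → M) where
  __ := (Equiv.piCurry fun _ _ => M).symm.trans (finSigmaFinEquiv.arrowCongr (Equiv.refl M))
  map_add' _ _ := rfl

theorem gcd_graph_iso_cubelike (r : ℕ) (n : Fin r → ℕ) (D : Set (Fin r → ℕ)) :
    ∃ (N : ℕ) (C : Set (Fin N → ZMod 2))
      (e : (∀ i, ZMod (2 ^ n i)) ≃ (Fin N → ZMod 2)),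
      N = ∑ i, n i ∧
      ∀ u v : ∀ i, ZMod (2 ^ n i),
        ((fun i => Nat.gcd ((u - v) i).val (2 ^ n i)) ∈ D ↔ e u - e v ∈ C) := by
  let Φ := Equiv.piCongrRight fun i => ZMod.digitEquiv 2 (n i)
  let e := Φ.trans (flattenAddEquiv n (ZMod 2)).toEquiv
  have he : ∀ u v, e.symm (e u - e v) = Φ.symm (Φ u - Φ v) := fun u v => by
    simp [e, ← map_sub]
  refine ⟨_, {c | (fun i => ((e.symm c) i).val.gcd (2 ^ n i)) ∈ D}, e, rfl, fun u v => ?_⟩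
  simp only [Set.mem_ofPred_eq, he]
  simp [Φ, ZMod.gcd_val_digitEquiv_symm_sub Nat.prime_two]
end
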